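/- In the same setting, the cochain (h_σ) can be modified componentwise by central elements so as to satisfy ρ̃(γ(σ)γ(τ)γ(στ)⁻¹) = h_σ⁻¹·ψ(σ)(h_τ⁻¹)·h_{στ} for all σ,τ if and only if the 2-cocycle (k_{σ,τ}) is a coboundary in H²(Γ, Z). -/
import Mathlib

section
variable {G : Type*} [Group G]

lemma cen_inv {p : G} (hp : ∀ g, p * g = g * p) : ∀ g, p⁻¹ * g = g * p⁻¹ := fun g => by
  have := congrArg (·⁻¹) (hp g⁻¹)
  simpa [mul_inv_rev] using this.symm

lemma cen_swap {p : G} (hp : ∀ g, p * g = g * p) : ∀ g h, p * (g * h) = g * (p * h) := by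
  intro g h; rw [← mul_assoc, hp g, mul_assoc]

lemma key1 (a b c p q r : G)
    (hp : ∀ g, p * g = g * p) (hq : ∀ g, q * g = g * q) (hr : ∀ g, r * g = g * r) :
    c⁻¹ * b * a * ((a * p)⁻¹ * (b * q)⁻¹ * (c * r)) = r * q⁻¹ * p⁻¹ := by
  simp only [mul_inv_rev, mul_assoc]
  simp only [cen_swap (cen_inv hp), cen_inv hp]
  simp only [cen_swap (cen_inv hq), cen_inv hq]
  simp only [cen_swap hr, hr]
  group

lemma center_map (e : MulAut G) {z : G}
    (hz : z ∈ Subgroup.center G) : e z ∈ Subgroup.center G := by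
  rw [Subgroup.mem_center_iff] at *
  intro g
  calc g * e z = e (e.symm g * z) := by simp [map_mul]
    _ = e (z * e.symm g) := by rw [hz (e.symm g)]
    _ = e z * g := by simp [map_mul]
end

/-- The `2`-cochain `k (σ,τ) = h (στ)⁻¹ * ψ σ (h τ) * h σ * ρ̃ (γ σ * γ τ * γ (στ)⁻¹)`. -/
def kcoc {P G Γ : Type*} [Group P] [Group G] [Group Γ]
    (π : P →* Γ) (γ : Γ → P) (hγ : ∀ σ, π (γ σ) = σ)
    (ψ : Γ →* MulAut G) (ρt : π.ker →* G) (h : Γ → G) (σ τ : Γ) : G :=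
  (h (σ * τ))⁻¹ * ψ σ (h τ) * h σ *
    ρt ⟨γ σ * γ τ * (γ (σ * τ))⁻¹, by
      rw [MonoidHom.mem_ker]
      simp only [map_mul, map_inv, hγ]
      group⟩

/-- the cochain `h` can be modified by central elements so as to satisfy
`ρ̃ (γ σ γ τ γ (στ)⁻¹) = (hσ)⁻¹ ψ σ ((hτ)⁻¹) h (στ)` for all `σ, τ` iff the
`2`-cocycle `k` is a coboundary with values in the centre. -/
theorem stmt9 {P G Γ : Type*} [Group P] [Group G] [Group Γ] [Finite Γ]
    (ψ : Γ →* MulAut G) (π : P →* Γ) (hπ : Function.Surjective π)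
    (γ : Γ → P) (hγ : ∀ σ, π (γ σ) = σ) (hγ1 : γ 1 = 1)
    (ρt : π.ker →* G) (h : Γ → G)
    (hinv : ∀ (σ : Γ) (α : π.ker),
      ψ σ (ρt ⟨(γ σ)⁻¹ * (α : P) * γ σ, by
          have hk : π (α : P) = 1 := MonoidHom.mem_ker.mp α.2
          rw [MonoidHom.mem_ker]
          simp [map_mul, map_inv, hγ, hk]⟩)
        = h σ * ρt α * (h σ)⁻¹)
    (hZ : ∀ g : G, (∀ α : π.ker, g * ρt α = ρt α * g) ↔ g ∈ Subgroup.center G) :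
    (∃ x : Γ → G, (∀ σ, x σ ∈ Subgroup.center G) ∧
        ∀ σ τ : Γ,
          ρt ⟨γ σ * γ τ * (γ (σ * τ))⁻¹, by
              rw [MonoidHom.mem_ker]
              simp only [map_mul, map_inv, hγ]
              group⟩
            = (h σ * x σ)⁻¹ * ψ σ ((h τ * x τ)⁻¹) * (h (σ * τ) * x (σ * τ)))
      ↔
    (∃ x : Γ → G, (∀ σ, x σ ∈ Subgroup.center G) ∧
        ∀ σ τ : Γ,
          kcoc π γ hγ ψ ρt h σ τ = (x (σ * τ))⁻¹ * ψ σ (x τ) * x σ) := by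
  constructor
  · rintro ⟨x, hc, hx⟩
    refine ⟨fun σ => (x σ)⁻¹, fun σ => Subgroup.inv_mem _ (hc σ), fun σ τ => ?_⟩
    unfold kcoc
    rw [hx σ τ]
    simp only [map_inv, map_mul, inv_inv]
    exact key1 (h σ) (ψ σ (h τ)) (h (σ * τ)) (x σ) (ψ σ (x τ)) (x (σ * τ))
      (fun g => (Subgroup.mem_center_iff.mp (hc σ) g).symm)
      (fun g => (Subgroup.mem_center_iff.mp (center_map _ (hc τ)) g).symm)
      (fun g => (Subgroup.mem_center_iff.mp (hc (σ * τ)) g).symm)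
  · rintro ⟨x, hc, hx⟩
    refine ⟨fun σ => (x σ)⁻¹, fun σ => Subgroup.inv_mem _ (hc σ), fun σ τ => ?_⟩
    have h2 := hx σ τ
    unfold kcoc at h2
    apply mul_left_cancel (a := (h (σ * τ))⁻¹ * ψ σ (h τ) * h σ)
    rw [h2]
    have := key1 (h σ) (ψ σ (h τ)) (h (σ * τ)) (x σ)⁻¹ (ψ σ (x τ))⁻¹ (x (σ * τ))⁻¹
      (fun g => (Subgroup.mem_center_iff.mp (Subgroup.inv_mem _ (hc σ)) g).symm)
      (fun g => (Subgroup.mem_center_iff.mp (Subgroup.inv_mem _ (center_map _ (hc τ))) g).symm)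
      (fun g => (Subgroup.mem_center_iff.mp (Subgroup.inv_mem _ (hc (σ * τ))) g).symm)
    simp only [map_inv, map_mul, inv_inv] at this ⊢
    rw [this]
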